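/- For every k ≥ 1 there is a constant C̃ > 0, depending only on k, T and d, with the following property. Let ε > 0 and set u(ε) = ε⌊u/ε⌋ for u ∈ [0,T]. Assume the 1/2-Hölder bound of order k holds, i.e. sup_t |Φ^(k)(γ)(t) − Φ^(k)(γ̃)(t)| ≤ C_k (sup_t |γ(t) − γ̃(t)|)^{1/2} for all γ, γ̃ ∈ H. Then for all γ, γ̃ ∈ H with sup_{0 ≤ t ≤ T} |γ(t) − γ̃(t)| ≤ ε², one has sup_{0 ≤ t ≤ T} | ∫_0^t ( γ̇(u) ⊗ Φ^(k)(γ)(u(ε)) − γ̃̇(u) ⊗ Φ^(k)(γ̃)(u(ε)) ) du | ≤ C̃ ε. -/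

import Mathlib

open MeasureTheory Filter Set

/-- The simplex `{u : 0 ≤ u 0 ≤ u 1 ≤ ⋯ ≤ u (ν-1) ≤ r}` in `ℝ^ν`. -/
def simplexSet (ν : ℕ) (r : ℝ) : Set (Fin ν → ℝ) :=
  {u | (∀ j, 0 ≤ u j) ∧ Monotone u ∧ ∀ j, u j ≤ r}

/-- The iterated integral map `Φ^(ν)`, coordinatewise:
`(Φ^(ν)(γ)(s))_{i_1,…,i_ν} = ∫_{0 ≤ u_1 ≤ ⋯ ≤ u_ν ≤ s} γ̇_{i_1}(u_1) ⋯ γ̇_{i_ν}(u_ν) du`. -/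
noncomputable def Phi (d ν : ℕ) (γ : ℝ → Fin d → ℝ) (s : ℝ) : (Fin ν → Fin d) → ℝ :=
  fun i => ∫ u in simplexSet ν s, ∏ j, deriv (fun v => γ v (i j)) (u j)

/-- Membership in `H`: paths `γ` with `γ(0) = 0` that are Lipschitz with constant 1
on `[0,T]`. -/
def HPath (d : ℕ) (T : ℝ) (γ : ℝ → Fin d → ℝ) : Prop :=
  γ 0 = 0 ∧ LipschitzOnWith 1 γ (Set.Icc 0 T)

open scoped Topology

/-- Derivative of a globally Lipschitz real function is bounded by the constant. -/
lemma abs_deriv_le_of_lipschitz {K : NNReal} {g : ℝ → ℝ} (hg : LipschitzWith K g) (x : ℝ) :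
    |deriv g x| ≤ K := by
  by_cases hd : DifferentiableAt ℝ g x
  · have h := hd.hasDerivAt
    rw [hasDerivAt_iff_tendsto_slope] at h
    have habs : Tendsto (fun y => |slope g x y|) (𝓝[≠] x) (𝓝 |deriv g x|) :=
      (continuous_abs.tendsto _).comp h
    refine le_of_tendsto habs ?_
    filter_upwards [self_mem_nhdsWithin] with y hy
    have hyx : y ≠ x := hy
    rw [slope_def_field, abs_div]
    rw [div_le_iff₀ (abs_pos.2 (sub_ne_zero.2 hyx))]
    have := hg.dist_le_mul y x
    rw [Real.dist_eq, Real.dist_eq] at this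
    simpa using this
  · rw [deriv_zero_of_not_differentiableAt hd]
    simpa using K.coe_nonneg

/-- FTC for globally Lipschitz functions, via difference quotients + dominated convergence. -/
lemma lipschitz_integral_deriv {K : NNReal} {f : ℝ → ℝ} (hf : LipschitzWith K f)
    {a b : ℝ} (hab : a ≤ b) : ∫ x in a..b, deriv f x = f b - f a := by
  have hc : Continuous f := hf.continuous
  set l : Filter ℝ := 𝓝[>] (0:ℝ) with hl
  have hint : ∀ p q : ℝ, IntervalIntegrable f volume p q := fun p q =>
    hc.intervalIntegrable p q
  -- the slope limit at a point c for the primitive from c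
  have piece : ∀ c : ℝ, Tendsto (fun h : ℝ => (∫ x in c..(c+h), f x) / h) l (𝓝 (f c)) := by
    intro c
    have hG : HasDerivAt (fun u => ∫ x in c..u, f x) (f c) c :=
      intervalIntegral.integral_hasDerivAt_right (hint c c)
        (hc.stronglyMeasurable.stronglyMeasurableAtFilter) hc.continuousAt
    rw [hasDerivAt_iff_tendsto_slope] at hG
    have hmap : Tendsto (fun h : ℝ => c + h) l (𝓝[≠] c) := by
      apply tendsto_nhdsWithin_of_tendsto_nhds_of_eventually_within
      · have : Tendsto (fun h : ℝ => c + h) (𝓝 0) (𝓝 c) := by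
          simpa using (continuous_add_left _).tendsto (0:ℝ)
        exact this.mono_left nhdsWithin_le_nhds
      · filter_upwards [self_mem_nhdsWithin] with h hh
        have : (0:ℝ) < h := hh
        simp only [mem_compl_iff, mem_singleton_iff]
        intro habs
        have : h = 0 := by linarith [habs]
        exact absurd this (ne_of_gt hh)
    have := hG.comp hmap
    apply this.congr
    intro h
    simp [slope_def_field, intervalIntegral.integral_same]
  -- dominated convergence for the difference quotients
  have key : Tendsto (fun h : ℝ => ∫ x in Ioc a b, (f (x + h) - f x) / h) l
      (𝓝 (∫ x in Ioc a b, deriv f x)) := by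
    apply tendsto_integral_filter_of_dominated_convergence (fun _ => (K:ℝ))
    · refine Eventually.of_forall fun h => ?_
      exact (((hc.comp (continuous_id.add continuous_const)).sub hc).div_const
        h).aestronglyMeasurable
    · filter_upwards [self_mem_nhdsWithin] with h hh
      have h0 : (0:ℝ) < h := hh
      refine Eventually.of_forall fun x => ?_
      have hd := hf.dist_le_mul (x + h) x
      rw [Real.dist_eq, Real.dist_eq] at hd
      rw [Real.norm_eq_abs, abs_div, abs_of_pos h0]
      rw [div_le_iff₀ h0]
      simpa [abs_of_pos h0] using hd
    · exact (integrableOn_const measure_Ioc_lt_top.ne)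
    · filter_upwards [ae_restrict_of_ae (hf.ae_differentiableAt (μ := volume))] with x hx
      have h := hx.hasDerivAt
      rw [hasDerivAt_iff_tendsto_slope] at h
      have hmap : Tendsto (fun h : ℝ => x + h) l (𝓝[≠] x) := by
        apply tendsto_nhdsWithin_of_tendsto_nhds_of_eventually_within
        · have : Tendsto (fun h : ℝ => x + h) (𝓝 0) (𝓝 x) := by
            simpa using (continuous_add_left _).tendsto (0:ℝ)
          exact this.mono_left nhdsWithin_le_nhds
        · filter_upwards [self_mem_nhdsWithin] with h hh
          have h0 : (0:ℝ) < h := hh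
          simp only [mem_compl_iff, mem_singleton_iff]
          intro habs
          have : h = 0 := by linarith [habs]
          exact absurd this (ne_of_gt h0)
      have := h.comp hmap
      apply this.congr
      intro h
      simp [slope_def_field]
  -- identification of the integral of the difference quotient
  have comp : (fun h : ℝ => ∫ x in Ioc a b, (f (x + h) - f x) / h) =ᶠ[l]
      (fun h : ℝ => ((∫ x in b..(b+h), f x) - ∫ x in a..(a+h), f x) / h) := by
    filter_upwards [self_mem_nhdsWithin] with h hh
    have e1 : (∫ x in Ioc a b, (f (x + h) - f x) / h) =
        ∫ x in a..b, (f (x + h) - f x) / h := (intervalIntegral.integral_of_le hab).symm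
    have hcomp : Continuous fun x : ℝ => f (x + h) := hc.comp (continuous_id.add continuous_const)
    rw [e1, intervalIntegral.integral_div, intervalIntegral.integral_sub
      (hcomp.intervalIntegrable _ _)
      (hc.intervalIntegrable _ _), intervalIntegral.integral_comp_add_right]
    congr 1
    have c1 : (∫ x in a..(a+h), f x) + ∫ x in (a+h)..(b+h), f x = ∫ x in a..(b+h), f x :=
      intervalIntegral.integral_add_adjacent_intervals (hint _ _) (hint _ _)
    have c2 : (∫ x in a..b, f x) + ∫ x in b..(b+h), f x = ∫ x in a..(b+h), f x :=
      intervalIntegral.integral_add_adjacent_intervals (hint _ _) (hint _ _)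
    linarith
  have lim2 : Tendsto (fun h : ℝ => ((∫ x in b..(b+h), f x) - ∫ x in a..(a+h), f x) / h) l
      (𝓝 (f b - f a)) := by
    have := (piece b).sub (piece a)
    apply this.congr
    intro h
    ring
  have := tendsto_nhds_unique key (lim2.congr' comp.symm)
  rw [intervalIntegral.integral_of_le hab, this]

/-- Composition with a measurable map with countable range is measurable. -/
lemma measurable_comp_countable_range {g : ℝ → ℝ} (hg : Measurable g)
    (hcr : (Set.range g).Countable) (f : ℝ → ℝ) : Measurable fun u => f (g u) := by
  intro A _
  have he : (fun u => f (g u)) ⁻¹' A = g ⁻¹' (Set.range g ∩ f ⁻¹' A) := by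
    ext u
    simp [Set.mem_preimage, Set.mem_inter_iff, Set.mem_range]
  rw [he]
  exact hg ((hcr.mono inter_subset_left).measurableSet)

section Main

variable {d : ℕ} {T : ℝ}

lemma component_lip {γ : ℝ → Fin d → ℝ} (hγ : HPath d T γ) (c : Fin d) :
    LipschitzOnWith 1 (fun v => γ v c) (Set.Icc 0 T) := by
  intro x hx y hy
  calc edist (γ x c) (γ y c) ≤ edist (γ x) (γ y) := edist_le_pi_edist (γ x) (γ y) c
  _ ≤ 1 * edist x y := hγ.2 hx hy

lemma exists_extension {γ : ℝ → Fin d → ℝ} (hγ : HPath d T γ) (c : Fin d) :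
    ∃ g : ℝ → ℝ, LipschitzWith 1 g ∧ Set.EqOn (fun v => γ v c) g (Set.Icc 0 T) ∧
      ∀ x ∈ Set.Ioo (0:ℝ) T, deriv (fun v => γ v c) x = deriv g x := by
  obtain ⟨g, hg, hgeq⟩ := (component_lip hγ c).extend_real
  refine ⟨g, hg, hgeq, fun x hx => ?_⟩
  have heq : (fun v => γ v c) =ᶠ[nhds x] g := by
    filter_upwards [isOpen_Ioo.mem_nhds hx] with y hy
    exact hgeq (Ioo_subset_Icc_self hy)
  exact heq.deriv_eq

lemma deriv_component_bound {γ : ℝ → Fin d → ℝ} (hγ : HPath d T γ) (c : Fin d)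
    {x : ℝ} (hx : x ∈ Set.Ioo (0:ℝ) T) : |deriv (fun v => γ v c) x| ≤ 1 := by
  obtain ⟨g, hg, -, hd⟩ := exists_extension hγ c
  rw [hd x hx]
  simpa using abs_deriv_le_of_lipschitz hg x

lemma ftc_component {γ : ℝ → Fin d → ℝ} (hγ : HPath d T γ) (c : Fin d) {p q : ℝ}
    (hp : 0 ≤ p) (hpq : p ≤ q) (hq : q ≤ T) :
    ∫ x in p..q, deriv (fun v => γ v c) x = γ q c - γ p c := by
  obtain ⟨g, hg, heq, hd⟩ := exists_extension hγ c
  have hae : ∀ᵐ x ∂(volume : Measure ℝ), x ∈ Set.uIoc p q →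
      deriv (fun v => γ v c) x = deriv g x := by
    have hT : ∀ᵐ x ∂(volume : Measure ℝ), x ≠ T := by
      refine (ae_iff.2 ?_)
      simpa using measure_singleton (α := ℝ) T
    filter_upwards [hT] with x hx hxI
    rw [Set.uIoc_of_le hpq] at hxI
    exact hd x ⟨lt_of_le_of_lt hp hxI.1, lt_of_le_of_ne (hxI.2.trans hq) hx⟩
  rw [intervalIntegral.integral_congr_ae hae, lipschitz_integral_deriv hg hpq,
    show g q = γ q c from (heq ⟨hp.trans hpq, hq⟩).symm,
    show g p = γ p c from (heq ⟨hp, hpq.trans hq⟩).symm]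

/-- Interval integrability from measurability and an a.e. bound. -/
lemma intervalIntegrable_of_bound {h : ℝ → ℝ} (hm : Measurable h) {p q C : ℝ} (hpq : p ≤ q)
    (hb : ∀ᵐ x ∂volume.restrict (Set.Ioc p q), |h x| ≤ C) :
    IntervalIntegrable h volume p q := by
  rw [intervalIntegrable_iff_integrableOn_Ioc_of_le hpq]
  refine Integrable.mono' (g := fun _ => C) (integrableOn_const measure_Ioc_lt_top.ne)
    hm.aestronglyMeasurable ?_
  simpa [Real.norm_eq_abs] using hb

lemma phi_abs_bound {k : ℕ} {γ : ℝ → Fin d → ℝ} (hγ : HPath d T γ) (hT : 0 < T)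
    {s : ℝ} (hs0 : 0 ≤ s) (hsT : s ≤ T) (j : Fin k → Fin d) :
    |Phi d k γ s j| ≤ T ^ k := by
  have hSm : MeasurableSet (simplexSet k s) := by
    have : simplexSet k s =
        (⋂ l, {u : Fin k → ℝ | 0 ≤ u l}) ∩ ((⋂ p, ⋂ q, ⋂ (_ : p ≤ q),
          {u : Fin k → ℝ | u p ≤ u q}) ∩ ⋂ l, {u : Fin k → ℝ | u l ≤ s}) := by
      ext u
      simp only [simplexSet, Set.mem_setOf_eq, Set.mem_inter_iff, Set.mem_iInter, Monotone]
    rw [this]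
    refine MeasurableSet.inter ?_ (MeasurableSet.inter ?_ ?_)
    · exact MeasurableSet.iInter fun l =>
        measurableSet_le measurable_const (measurable_pi_apply l)
    · exact MeasurableSet.iInter fun p => MeasurableSet.iInter fun q =>
        MeasurableSet.iInter fun _ =>
          measurableSet_le (measurable_pi_apply p) (measurable_pi_apply q)
    · exact MeasurableSet.iInter fun l =>
        measurableSet_le (measurable_pi_apply l) measurable_const
  have hvol : volume (simplexSet k s) ≤ ENNReal.ofReal s ^ k := by
    have hsub : simplexSet k s ⊆ Set.pi Set.univ (fun _ : Fin k => Set.Icc 0 s) := by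
      intro u hu
      rw [Set.mem_univ_pi]
      exact fun l => ⟨hu.1 l, hu.2.2 l⟩
    calc volume (simplexSet k s) ≤ volume (Set.pi Set.univ (fun _ : Fin k => Set.Icc 0 s)) :=
      measure_mono hsub
    _ = ENNReal.ofReal s ^ k := by
      rw [volume_pi_pi]
      simp [Real.volume_Icc]
  have hvfin : volume (simplexSet k s) < ⊤ :=
    lt_of_le_of_lt hvol (by exact ENNReal.pow_lt_top ENNReal.ofReal_lt_top)
  have hbad : volume (⋃ l : Fin k, Function.eval l ⁻¹' ({0, T} : Set ℝ)) = 0 := by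
    refine measure_iUnion_null fun l => ?_
    rw [show Function.eval l ⁻¹' ({0, T} : Set ℝ) =
      Set.pi Set.univ (Function.update (fun _ : Fin k => (Set.univ : Set ℝ)) l {0, T}) from
        Set.eval_preimage]
    rw [volume_pi_pi]
    refine Finset.prod_eq_zero (Finset.mem_univ l) ?_
    simp only [Function.update_self]
    exact ((Set.finite_singleton T).insert 0).measure_zero _
  have hbound : ∀ᵐ u ∂volume.restrict (simplexSet k s),
      ‖∏ l, deriv (fun v => γ v (j l)) (u l)‖ ≤ 1 := by
    have h2 : ∀ᵐ u ∂volume.restrict (simplexSet k s),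
        u ∉ ⋃ l : Fin k, Function.eval l ⁻¹' ({0, T} : Set ℝ) :=
      ae_restrict_of_ae (measure_eq_zero_iff_ae_notMem.mp hbad)
    filter_upwards [ae_restrict_mem hSm, h2] with u hu hnot
    simp only [Set.mem_iUnion, not_exists, Set.mem_preimage, Set.mem_insert_iff,
      Set.mem_singleton_iff, not_or, Function.eval] at hnot
    rw [Real.norm_eq_abs, Finset.abs_prod]
    refine Finset.prod_le_one (fun l _ => abs_nonneg _) (fun l _ => ?_)
    refine deriv_component_bound hγ (j l) ⟨?_, ?_⟩
    · exact lt_of_le_of_ne (hu.1 l) (Ne.symm (hnot l).1)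
    · exact lt_of_le_of_ne ((hu.2.2 l).trans hsT) (hnot l).2
  have := norm_setIntegral_le_of_norm_le_const_ae hvfin hbound (f := fun u : Fin k → ℝ =>
    ∏ l, deriv (fun v => γ v (j l)) (u l)) (μ := volume)
  rw [Real.norm_eq_abs] at this
  refine le_trans ((le_of_eq rfl).trans this) ?_
  rw [one_mul]
  calc (volume (simplexSet k s)).toReal ≤ (ENNReal.ofReal s ^ k).toReal :=
    ENNReal.toReal_mono (by simp) hvol
  _ = s ^ k := by rw [ENNReal.toReal_pow, ENNReal.toReal_ofReal hs0]
  _ ≤ T ^ k := pow_le_pow_left₀ hs0 hsT k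

end Main

/-- assuming the `1/2`-Hölder bound of order `k` (with constant `Ck`),
there is `C̃ > 0` (depending only on `k`, `T`, `d` and `Ck`) such that whenever
`γ, γ̃ ∈ H` satisfy `sup_{[0,T]} |γ − γ̃| ≤ ε²`, one has
`sup_{0≤t≤T} |∫_0^t (γ̇(u) ⊗ Φ^(k)(γ)(u(ε)) − γ̃̇(u) ⊗ Φ^(k)(γ̃)(u(ε))) du| ≤ C̃ ε`,
where `u(ε) = ε⌊u/ε⌋`. -/
theorem Phi_discretized_difference_bound (d k : ℕ) (hk : 1 ≤ k) (T : ℝ) (hT : 0 < T)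
    (Ck : ℝ)
    (hCk : ∀ γ γ' : ℝ → Fin d → ℝ, HPath d T γ → HPath d T γ' →
      ∀ t ∈ Set.Icc (0:ℝ) T,
        ‖Phi d k γ t - Phi d k γ' t‖ ≤
          Ck * (⨆ s : Set.Icc (0:ℝ) T, ‖γ s - γ' s‖) ^ ((1:ℝ)/2)) :
    ∃ C > 0, ∀ ε > (0:ℝ), ∀ γ γ' : ℝ → Fin d → ℝ, HPath d T γ → HPath d T γ' →
      (∀ s ∈ Set.Icc (0:ℝ) T, ‖γ s - γ' s‖ ≤ ε ^ 2) →
      ∀ t ∈ Set.Icc (0:ℝ) T, ∀ i : Fin d, ∀ j : Fin k → Fin d,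
        |∫ u in (0:ℝ)..t,
            (deriv (fun v => γ v i) u * Phi d k γ (ε * ⌊u / ε⌋₊) j
              - deriv (fun v => γ' v i) u * Phi d k γ' (ε * ⌊u / ε⌋₊) j)| ≤ C * ε := by
  set M : ℝ := T ^ k with hM
  have hM0 : 0 ≤ M := pow_nonneg hT.le k
  set KC : ℝ := max Ck 0 with hKC
  have hKC0 : 0 ≤ KC := le_max_right Ck 0
  refine ⟨KC * T + 4 * M * T + 2 * M + 1, by positivity, ?_⟩
  intro ε hε γ γ' hγ hγ' hsup t ht i j
  have ht0 : 0 ≤ t := ht.1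
  have htT : t ≤ T := ht.2
  -- the Hölder consequence
  have hPhidiff : ∀ s ∈ Set.Icc (0:ℝ) T, ∀ jj : Fin k → Fin d,
      |Phi d k γ s jj - Phi d k γ' s jj| ≤ KC * ε := by
    have hne : Nonempty (Set.Icc (0:ℝ) T) := ⟨⟨0, le_refl 0, hT.le⟩⟩
    have hbdd : BddAbove (Set.range fun s : Set.Icc (0:ℝ) T => ‖γ s - γ' s‖) := by
      refine ⟨ε ^ 2, ?_⟩
      rintro _ ⟨s, rfl⟩
      exact hsup s s.2
    have hSle : (⨆ s : Set.Icc (0:ℝ) T, ‖γ s - γ' s‖) ≤ ε ^ 2 :=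
      ciSup_le fun s => hsup s s.2
    have hS0 : 0 ≤ ⨆ s : Set.Icc (0:ℝ) T, ‖γ s - γ' s‖ :=
      le_trans (norm_nonneg _) (le_ciSup hbdd ⟨0, le_refl 0, hT.le⟩)
    have hrp : (⨆ s : Set.Icc (0:ℝ) T, ‖γ s - γ' s‖) ^ ((1:ℝ)/2) ≤ ε := by
      have h1 : (⨆ s : Set.Icc (0:ℝ) T, ‖γ s - γ' s‖) ^ ((1:ℝ)/2) ≤
          (ε ^ 2 : ℝ) ^ ((1:ℝ)/2) := Real.rpow_le_rpow hS0 hSle (by norm_num)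
      refine h1.trans (le_of_eq ?_)
      rw [show (ε ^ 2 : ℝ) = ε ^ (2:ℕ) from rfl, ← Real.rpow_natCast ε 2,
        ← Real.rpow_mul hε.le]
      norm_num
    intro s hs jj
    have h2 : |(Phi d k γ s - Phi d k γ' s) jj| ≤ ‖Phi d k γ s - Phi d k γ' s‖ := by
      simpa [Real.norm_eq_abs] using norm_le_pi_norm (Phi d k γ s - Phi d k γ' s) jj
    rw [Pi.sub_apply] at h2
    calc |Phi d k γ s jj - Phi d k γ' s jj| ≤ ‖Phi d k γ s - Phi d k γ' s‖ := h2
    _ ≤ Ck * (⨆ s : Set.Icc (0:ℝ) T, ‖γ s - γ' s‖) ^ ((1:ℝ)/2) := hCk γ γ' hγ hγ' s hs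
    _ ≤ KC * (⨆ s : Set.Icc (0:ℝ) T, ‖γ s - γ' s‖) ^ ((1:ℝ)/2) :=
      mul_le_mul_of_nonneg_right (le_max_left _ _) (Real.rpow_nonneg hS0 _)
    _ ≤ KC * ε := mul_le_mul_of_nonneg_left hrp hKC0
  -- discretization map
  set m : ℝ → ℝ := fun u => ε * (⌊u / ε⌋₊ : ℝ) with hm
  have hmmono : Monotone m := by
    intro u v huv
    exact mul_le_mul_of_nonneg_left
      (Nat.cast_le.2 (Nat.floor_mono ((div_le_div_iff_of_pos_right hε).2 huv))) hε.le
  have hmrange : (Set.range m).Countable := by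
    refine Set.Countable.mono ?_ (Set.countable_range fun n : ℕ => ε * (n : ℝ))
    rintro _ ⟨u, rfl⟩
    exact ⟨⌊u / ε⌋₊, rfl⟩
  have hm0 : ∀ u, 0 ≤ m u := fun u => mul_nonneg hε.le (Nat.cast_nonneg _)
  have hmle : ∀ u, 0 ≤ u → m u ≤ u := by
    intro u hu
    calc m u ≤ ε * (u / ε) :=
      mul_le_mul_of_nonneg_left (Nat.floor_le (div_nonneg hu hε.le)) hε.le
    _ = u := by field_simp
  -- derivative components and Phi compositions
  set dγ : ℝ → ℝ := deriv (fun v => γ v i) with hdγ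
  set dγ' : ℝ → ℝ := deriv (fun v => γ' v i) with hdγ'
  set φ : ℝ → ℝ := fun u => Phi d k γ (m u) j with hφ
  set φ' : ℝ → ℝ := fun u => Phi d k γ' (m u) j with hφ'
  have hmdγ : Measurable dγ := measurable_deriv _
  have hmdγ' : Measurable dγ' := measurable_deriv _
  have hmφ : Measurable φ :=
    measurable_comp_countable_range hmmono.measurable hmrange (fun s => Phi d k γ s j)
  have hmφ' : Measurable φ' :=
    measurable_comp_countable_range hmmono.measurable hmrange (fun s => Phi d k γ' s j)
  -- a.e. bounds on (0, t]
  have haeT : ∀ᵐ x ∂(volume : Measure ℝ), x ≠ T := by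
    refine ae_iff.2 ?_
    simpa using measure_singleton (α := ℝ) T
  have hIsub : ∀ {p q : ℝ}, 0 ≤ p → q ≤ t → Set.Ioc p q ⊆ Set.Ioc 0 t := by
    intro p q hp hq x hx
    exact ⟨lt_of_le_of_lt hp hx.1, hx.2.trans hq⟩
  have hb1 : ∀ᵐ u ∂volume.restrict (Set.Ioc 0 t), |dγ u| ≤ 1 := by
    filter_upwards [ae_restrict_mem measurableSet_Ioc, ae_restrict_of_ae haeT] with u hu huT
    exact deriv_component_bound hγ i ⟨hu.1, lt_of_le_of_ne (hu.2.trans htT) huT⟩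
  have hb1' : ∀ᵐ u ∂volume.restrict (Set.Ioc 0 t), |dγ' u| ≤ 1 := by
    filter_upwards [ae_restrict_mem measurableSet_Ioc, ae_restrict_of_ae haeT] with u hu huT
    exact deriv_component_bound hγ' i ⟨hu.1, lt_of_le_of_ne (hu.2.trans htT) huT⟩
  have hmuIcc : ∀ u ∈ Set.Ioc (0:ℝ) t, m u ∈ Set.Icc (0:ℝ) T :=
    fun u hu => ⟨hm0 u, (hmle u hu.1.le).trans (hu.2.trans htT)⟩
  have hφb : ∀ u ∈ Set.Ioc (0:ℝ) t, |φ u| ≤ M := fun u hu =>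
    phi_abs_bound hγ hT (hmuIcc u hu).1 (hmuIcc u hu).2 j
  have hφ'b : ∀ u ∈ Set.Ioc (0:ℝ) t, |φ' u| ≤ M := fun u hu =>
    phi_abs_bound hγ' hT (hmuIcc u hu).1 (hmuIcc u hu).2 j
  have hφdb : ∀ u ∈ Set.Ioc (0:ℝ) t, |φ u - φ' u| ≤ KC * ε := fun u hu =>
    hPhidiff (m u) (hmuIcc u hu) j
  -- the two pieces
  set f1 : ℝ → ℝ := fun u => dγ u * (φ u - φ' u) with hf1
  set f2 : ℝ → ℝ := fun u => (dγ u - dγ' u) * φ' u with hf2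
  have hb2 : ∀ᵐ u ∂volume.restrict (Set.Ioc 0 t), |f1 u| ≤ KC * ε := by
    filter_upwards [hb1, ae_restrict_mem measurableSet_Ioc] with u h1 hu
    calc |f1 u| = |dγ u| * |φ u - φ' u| := abs_mul _ _
    _ ≤ 1 * (KC * ε) := mul_le_mul h1 (hφdb u hu) (abs_nonneg _) zero_le_one
    _ = KC * ε := one_mul _
  have hb3 : ∀ᵐ u ∂volume.restrict (Set.Ioc 0 t), |f2 u| ≤ 2 * M := by
    filter_upwards [hb1, hb1', ae_restrict_mem measurableSet_Ioc] with u h1 h1' hu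
    calc |f2 u| = |dγ u - dγ' u| * |φ' u| := abs_mul _ _
    _ ≤ 2 * M := by
      refine mul_le_mul ?_ (hφ'b u hu) (abs_nonneg _) (by norm_num)
      calc |dγ u - dγ' u| ≤ |dγ u| + |dγ' u| := abs_sub _ _
      _ ≤ 2 := by linarith
  have hi1 : IntervalIntegrable f1 volume 0 t :=
    intervalIntegrable_of_bound (hmdγ.mul (hmφ.sub hmφ')) ht0 hb2
  have hi2 : IntervalIntegrable f2 volume 0 t :=
    intervalIntegrable_of_bound ((hmdγ.sub hmdγ').mul hmφ') ht0 hb3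
  have hsplit : (∫ u in (0:ℝ)..t,
      (deriv (fun v => γ v i) u * Phi d k γ (ε * ⌊u / ε⌋₊) j
        - deriv (fun v => γ' v i) u * Phi d k γ' (ε * ⌊u / ε⌋₊) j))
      = (∫ u in (0:ℝ)..t, f1 u) + ∫ u in (0:ℝ)..t, f2 u := by
    rw [← intervalIntegral.integral_add hi1 hi2]
    refine intervalIntegral.integral_congr fun u _ => ?_
    show dγ u * φ u - dγ' u * φ' u = f1 u + f2 u
    simp only [hf1, hf2]
    ring
  -- bound on the first piece
  have hT1 : |∫ u in (0:ℝ)..t, f1 u| ≤ KC * ε * t := by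
    have := intervalIntegral.norm_integral_le_of_norm_le_const_ae (C := KC * ε)
      (f := f1) (a := 0) (b := t) ?_
    · rw [Real.norm_eq_abs] at this
      refine this.trans (le_of_eq ?_)
      rw [abs_of_nonneg (by linarith : (0:ℝ) ≤ t - 0), sub_zero]
    · have := (ae_restrict_iff' measurableSet_Ioc).1 hb2
      filter_upwards [this] with u hu huI
      rw [Set.uIoc_of_le ht0] at huI
      simpa [Real.norm_eq_abs] using hu huI
  -- telescoping for the second piece
  set N : ℕ := ⌊t / ε⌋₊ + 1 with hN
  set a : ℕ → ℝ := fun n => min ((n : ℝ) * ε) t with ha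
  have hamono : Monotone a := fun p q hpq =>
    min_le_min (mul_le_mul_of_nonneg_right (Nat.cast_le.2 hpq) hε.le) le_rfl
  have ha0 : a 0 = 0 := by simp [ha, ht0]
  have haN : a N = t := by
    refine min_eq_right ?_
    have h1 : t / ε < (N : ℝ) := by
      rw [hN]
      push_cast
      exact Nat.lt_floor_add_one _
    calc t = t / ε * ε := by field_simp
    _ ≤ (N : ℝ) * ε := mul_le_mul_of_nonneg_right h1.le hε.le
  have han : ∀ n, 0 ≤ a n := fun n => le_min (mul_nonneg (Nat.cast_nonneg _) hε.le) ht0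
  have hant : ∀ n, a n ≤ t := fun n => min_le_right _ _
  have hint2 : ∀ n : ℕ, IntervalIntegrable f2 volume (a n) (a (n + 1)) := by
    intro n
    refine intervalIntegrable_of_bound (C := 2 * M) ((hmdγ.sub hmdγ').mul hmφ')
      (hamono (Nat.le_succ n)) ?_
    exact ae_restrict_of_ae_restrict_of_subset (hIsub (han n) (hant (n+1))) hb3
  have hsum : ∑ n ∈ Finset.range N, ∫ u in a n..a (n + 1), f2 u = ∫ u in (0:ℝ)..t, f2 u := by
    rw [intervalIntegral.sum_integral_adjacent_intervals fun n _ => hint2 n, ha0, haN]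
  -- each piece
  have hpiece : ∀ n < N, |∫ u in a n..a (n + 1), f2 u| ≤ 2 * ε ^ 2 * M := by
    intro n hn
    have hnT : ε * (n : ℝ) ≤ T := by
      have h1 : (n : ℝ) ≤ ⌊t / ε⌋₊ := by
        exact_mod_cast Nat.lt_succ_iff.1 hn
      have h2 : (⌊t / ε⌋₊ : ℝ) ≤ t / ε := Nat.floor_le (div_nonneg ht0 hε.le)
      calc ε * (n : ℝ) ≤ ε * (t / ε) := mul_le_mul_of_nonneg_left (h1.trans h2) hε.le
      _ = t := by field_simp
      _ ≤ T := htT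
    have hconst : ∀ᵐ u ∂(volume : Measure ℝ), u ∈ Set.uIoc (a n) (a (n + 1)) →
        f2 u = (dγ u - dγ' u) * Phi d k γ' (ε * (n : ℝ)) j := by
      have hane : ∀ᵐ u ∂(volume : Measure ℝ), u ≠ a (n + 1) := by
        refine ae_iff.2 ?_
        simpa using measure_singleton (a (n+1))
      filter_upwards [hane] with u hune huI
      rw [Set.uIoc_of_le (hamono (Nat.le_succ n))] at huI
      have hu2 : u < a (n + 1) := lt_of_le_of_ne huI.2 hune
      have hu1 : (n : ℝ) * ε < u := by
        rcases le_or_gt ((n : ℝ) * ε) t with h | h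
        · rw [ha] at huI
          simpa [min_eq_left h] using lt_of_le_of_lt (le_refl _) huI.1
        · exfalso
          have : a n = t := min_eq_right h.le
          have h3 : t < u := by rw [← this]; exact huI.1
          have h4 : u ≤ t := hu2.le.trans (hant (n+1))
          linarith
      have hfloor : ⌊u / ε⌋₊ = n := by
        rw [Nat.floor_eq_iff (div_nonneg (le_trans (by positivity) hu1.le) hε.le)]
        constructor
        · rw [le_div_iff₀ hε]
          linarith
        · rw [div_lt_iff₀ hε]
          have : u < ((n : ℝ) + 1) * ε := by
            have := hu2.trans_le (min_le_left _ _)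
            push_cast at this ⊢
            linarith
          linarith
      show (dγ u - dγ' u) * φ' u = _
      rw [hφ']
      simp only [hm, hfloor]
    rw [intervalIntegral.integral_congr_ae hconst, intervalIntegral.integral_mul_const]
    have hia : IntervalIntegrable dγ volume (a n) (a (n+1)) := by
      refine intervalIntegrable_of_bound (C := 1) hmdγ (hamono (Nat.le_succ n)) ?_
      exact ae_restrict_of_ae_restrict_of_subset (hIsub (han n) (hant (n+1))) hb1
    have hia' : IntervalIntegrable dγ' volume (a n) (a (n+1)) := by
      refine intervalIntegrable_of_bound (C := 1) hmdγ' (hamono (Nat.le_succ n)) ?_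
      exact ae_restrict_of_ae_restrict_of_subset (hIsub (han n) (hant (n+1))) hb1'
    rw [intervalIntegral.integral_sub hia hia',
      ftc_component hγ i (han n) (hamono (Nat.le_succ n)) ((hant (n+1)).trans htT),
      ftc_component hγ' i (han n) (hamono (Nat.le_succ n)) ((hant (n+1)).trans htT)]
    have hcomp : ∀ s : ℝ, s ∈ Set.Icc (0:ℝ) T → |γ s i - γ' s i| ≤ ε ^ 2 := by
      intro s hs
      have h2 : |(γ s - γ' s) i| ≤ ‖γ s - γ' s‖ := by
        simpa [Real.norm_eq_abs] using norm_le_pi_norm (γ s - γ' s) i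
      rw [Pi.sub_apply] at h2
      exact h2.trans (hsup s hs)
    have hd1 : |γ (a (n+1)) i - γ (a n) i - (γ' (a (n+1)) i - γ' (a n) i)| ≤ 2 * ε ^ 2 := by
      have e : γ (a (n+1)) i - γ (a n) i - (γ' (a (n+1)) i - γ' (a n) i)
          = (γ (a (n+1)) i - γ' (a (n+1)) i) - (γ (a n) i - γ' (a n) i) := by ring
      rw [e]
      have h1 := hcomp (a (n+1)) ⟨han _, (hant _).trans htT⟩
      have h2 := hcomp (a n) ⟨han _, (hant _).trans htT⟩
      calc |(γ (a (n+1)) i - γ' (a (n+1)) i) - (γ (a n) i - γ' (a n) i)|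
          ≤ |γ (a (n+1)) i - γ' (a (n+1)) i| + |γ (a n) i - γ' (a n) i| := abs_sub _ _
      _ ≤ 2 * ε ^ 2 := by linarith
    have hPb : |Phi d k γ' (ε * (n : ℝ)) j| ≤ M :=
      phi_abs_bound hγ' hT (mul_nonneg hε.le (Nat.cast_nonneg _)) hnT j
    calc |(γ (a (n+1)) i - γ (a n) i - (γ' (a (n+1)) i - γ' (a n) i)) *
        Phi d k γ' (ε * (n : ℝ)) j|
        = |γ (a (n+1)) i - γ (a n) i - (γ' (a (n+1)) i - γ' (a n) i)| *
          |Phi d k γ' (ε * (n : ℝ)) j| := abs_mul _ _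
    _ ≤ 2 * ε ^ 2 * M := mul_le_mul hd1 hPb (abs_nonneg _) (by positivity)
  have hT2 : |∫ u in (0:ℝ)..t, f2 u| ≤ (N : ℝ) * (2 * ε ^ 2 * M) := by
    rw [← hsum]
    calc |∑ n ∈ Finset.range N, ∫ u in a n..a (n + 1), f2 u|
        ≤ ∑ n ∈ Finset.range N, |∫ u in a n..a (n + 1), f2 u| := Finset.abs_sum_le_sum_abs _ _
    _ ≤ ∑ _n ∈ Finset.range N, (2 * ε ^ 2 * M) := by
      refine Finset.sum_le_sum fun n hn => hpiece n (Finset.mem_range.1 hn)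
    _ = (N : ℝ) * (2 * ε ^ 2 * M) := by
      rw [Finset.sum_const, Finset.card_range, nsmul_eq_mul]
  -- combine
  rcases le_or_gt ε T with hεT | hεT
  · have hNε : (N : ℝ) * ε ≤ t + ε := by
      have h2 : (⌊t / ε⌋₊ : ℝ) ≤ t / ε := Nat.floor_le (div_nonneg ht0 hε.le)
      have : (N : ℝ) ≤ t / ε + 1 := by
        rw [hN]; push_cast; linarith
      calc (N : ℝ) * ε ≤ (t / ε + 1) * ε := mul_le_mul_of_nonneg_right this hε.le
      _ = t + ε := by field_simp
    have h2 : (N : ℝ) * (2 * ε ^ 2 * M) ≤ 4 * M * T * ε := by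
      have e : (N : ℝ) * (2 * ε ^ 2 * M) = ((N : ℝ) * ε) * (2 * ε * M) := by ring
      rw [e]
      calc ((N : ℝ) * ε) * (2 * ε * M) ≤ (t + ε) * (2 * ε * M) :=
        mul_le_mul_of_nonneg_right hNε (by positivity)
      _ ≤ (T + T) * (2 * ε * M) := by
        refine mul_le_mul_of_nonneg_right (by linarith) (by positivity)
      _ = 4 * M * T * ε := by ring
    rw [hsplit]
    calc |(∫ u in (0:ℝ)..t, f1 u) + ∫ u in (0:ℝ)..t, f2 u|
        ≤ |∫ u in (0:ℝ)..t, f1 u| + |∫ u in (0:ℝ)..t, f2 u| := abs_add_le _ _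
    _ ≤ KC * ε * t + (N : ℝ) * (2 * ε ^ 2 * M) := add_le_add hT1 hT2
    _ ≤ KC * ε * T + 4 * M * T * ε := by
      refine add_le_add ?_ h2
      exact mul_le_mul_of_nonneg_left htT (by positivity)
    _ ≤ (KC * T + 4 * M * T + 2 * M + 1) * ε := by nlinarith
  · -- ε > T : crude bound
    have hcrude : |∫ u in (0:ℝ)..t,
        (deriv (fun v => γ v i) u * Phi d k γ (ε * ⌊u / ε⌋₊) j
          - deriv (fun v => γ' v i) u * Phi d k γ' (ε * ⌊u / ε⌋₊) j)| ≤ 2 * M * t := by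
      have hb : ∀ᵐ u ∂(volume : Measure ℝ), u ∈ Set.uIoc (0:ℝ) t →
          ‖dγ u * φ u - dγ' u * φ' u‖ ≤ 2 * M := by
        have h1 := (ae_restrict_iff' measurableSet_Ioc).1 hb1
        have h1' := (ae_restrict_iff' measurableSet_Ioc).1 hb1'
        filter_upwards [h1, h1'] with u hu hu' huI
        rw [Set.uIoc_of_le ht0] at huI
        rw [Real.norm_eq_abs]
        calc |dγ u * φ u - dγ' u * φ' u| ≤ |dγ u * φ u| + |dγ' u * φ' u| := abs_sub _ _
        _ = |dγ u| * |φ u| + |dγ' u| * |φ' u| := by rw [abs_mul, abs_mul]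
        _ ≤ 1 * M + 1 * M := add_le_add
            (mul_le_mul (hu huI) (hφb u huI) (abs_nonneg _) zero_le_one)
            (mul_le_mul (hu' huI) (hφ'b u huI) (abs_nonneg _) zero_le_one)
        _ = 2 * M := by ring
      have := intervalIntegral.norm_integral_le_of_norm_le_const_ae hb
      rw [Real.norm_eq_abs, sub_zero, abs_of_nonneg ht0] at this
      exact this
    calc |∫ u in (0:ℝ)..t,
        (deriv (fun v => γ v i) u * Phi d k γ (ε * ⌊u / ε⌋₊) j
          - deriv (fun v => γ' v i) u * Phi d k γ' (ε * ⌊u / ε⌋₊) j)| ≤ 2 * M * t := hcrude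
    _ ≤ 2 * M * ε := mul_le_mul_of_nonneg_left (htT.trans hεT.le) (by positivity)
    _ ≤ (KC * T + 4 * M * T + 2 * M + 1) * ε := by
      refine mul_le_mul_of_nonneg_right ?_ hε.le
      nlinarith [mul_nonneg hKC0 hT.le, mul_nonneg (mul_nonneg (by norm_num : (0:ℝ) ≤ 4) hM0) hT.le]
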